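/- With notation as above, the restriction of ψ : N_W(W₀) → π⁻¹(N_W(W₀))/K₀ to the complement U₀ = {w ∈ N_W(W₀) : N(w) ∩ W₀ = ∅} is a group homomorphism, and moreover for all u ∈ U₀ and t ∈ S₀ we have ψ(u)ψ(t) = ψ(utu⁻¹)ψ(u). -/

import Mathlib

open CoxeterSystem

variable {B W : Type*} [Group W] {M : CoxeterMatrix B}

/-- The left inversion set `N(w) = {t ∈ T : ℓ(tw) < ℓ(w)}`. -/
def invSet (cs : CoxeterSystem M W) (w : W) : Set W := {t | cs.IsLeftInversion w t}

/-- A reflection subgroup: a subgroup generated by a set of reflections. -/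
def IsReflectionSubgroup (cs : CoxeterSystem M W) (W₀ : Subgroup W) : Prop :=
  ∃ A : Set W, (∀ t ∈ A, cs.IsReflection t) ∧ Subgroup.closure A = W₀

/-- The canonical Coxeter generating set `S₀ = {t ∈ T : N(t) ∩ W₀ = {t}}`. -/
def canonicalGens (cs : CoxeterSystem M W) (W₀ : Subgroup W) : Set W :=
  {t | cs.IsReflection t ∧ invSet cs t ∩ (W₀ : Set W) = {t}}

/-- The complement `U₀ = {w ∈ N_W(W₀) : N(w) ∩ W₀ = ∅}`, as a set. -/
def Uset (cs : CoxeterSystem M W) (W₀ : Subgroup W) : Set W :=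
  {w | w ∈ Subgroup.normalizer (W₀ : Set W) ∧ invSet cs w ∩ (W₀ : Set W) = ∅}

/-- The braid relations defining the Artin group of a Coxeter matrix `M`. -/
def braidRelsSet (M : CoxeterMatrix B) : Set (FreeGroup B) :=
  {r | ∃ i j : B, r = ((CoxeterSystem.braidWord M i j).map FreeGroup.of).prod *
        (((CoxeterSystem.braidWord M j i).map FreeGroup.of).prod)⁻¹}

/-- The Artin group of the Coxeter matrix `M`. -/
abbrev ArtinGroup (M : CoxeterMatrix B) := PresentedGroup (braidRelsSet M)

/-- The element `σ_{i₁} ⋯ σ_{i_m}` of the Artin group corresponding to a word. -/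
def artinWord (M : CoxeterMatrix B) (l : List B) : ArtinGroup M :=
  (l.map (fun i => (PresentedGroup.of i : ArtinGroup M))).prod

/-- The subgroup `K₀` of the Artin group, generated by the elements `β σ² β⁻¹`
with `π(β σ β⁻¹) ∉ W₀`. -/
def K0 (W₀ : Subgroup W) (pr : ArtinGroup M →* W) : Subgroup (ArtinGroup M) :=
  Subgroup.closure {x | ∃ (β : ArtinGroup M) (i : B),
    x = β * (PresentedGroup.of i : ArtinGroup M) * PresentedGroup.of i * β⁻¹ ∧
    pr (β * (PresentedGroup.of i : ArtinGroup M) * β⁻¹) ∉ W₀}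

namespace PsiHomAux

open List

open scoped Classical

variable {B W : Type*} [Group W] {M : CoxeterMatrix B} (cs : CoxeterSystem M W)

/-- The permutation of `W × ZMod 2` associated to a simple reflection. -/
noncomputable def mu (i : B) : Equiv.Perm (W × ZMod 2) :=
  Function.Involutive.toPerm
    (fun p => (cs.simple i * p.1 * cs.simple i, p.2 + if p.1 = cs.simple i then 1 else 0))
    (by
      rintro ⟨t, e⟩
      have hs := cs.simple_mul_simple_self i
      have h2 : (cs.simple i * t * cs.simple i = cs.simple i) ↔ (t = cs.simple i) := by
        constructor
        · intro h
          have := congrArg (fun x => cs.simple i * x * cs.simple i) h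
          simpa [mul_assoc] using this
        · rintro rfl; simp [hs, mul_assoc]
      have hcc : ∀ c : ZMod 2, c + c = 0 := by decide
      simp only [Prod.mk.injEq]
      constructor
      · simp [mul_assoc]
      · rw [if_congr h2 rfl rfl, add_assoc, hcc, add_zero])

lemma mu_apply (i : B) (t : W) (e : ZMod 2) :
    mu cs i (t, e) = (cs.simple i * t * cs.simple i, e + if t = cs.simple i then 1 else 0) := rfl

lemma muProd_apply (l : List B) (t : W) (e : ZMod 2) :
    (l.map (mu cs)).prod (t, e) =
      (cs.wordProd l * t * (cs.wordProd l)⁻¹,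
        e + (((cs.rightInvSeq l).count t : ℕ) : ZMod 2)) := by
  induction l with
  | nil => simp
  | cons i l ih =>
    rw [map_cons, prod_cons, Equiv.Perm.mul_apply, ih, mu_apply]
    have hd : cs.rightInvSeq (i :: l) =
        ((cs.wordProd l)⁻¹ * cs.simple i * cs.wordProd l) :: cs.rightInvSeq l := rfl
    have hiff : (cs.wordProd l * t * (cs.wordProd l)⁻¹ = cs.simple i) ↔
        ((cs.wordProd l)⁻¹ * cs.simple i * cs.wordProd l = t) := by
      constructor
      · intro h; rw [← h]; group
      · intro h; rw [← h]; group
    rw [hd, wordProd_cons]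
    refine Prod.ext ?_ ?_
    · simp [mul_assoc]
    · simp only [List.count_cons, beq_iff_eq]
      push_cast
      rw [if_congr hiff rfl rfl]
      ring


/-- The word `[i, j, i, j, ...]` of length `2 * k`. -/
def dword (i j : B) : ℕ → List B
  | 0 => []
  | k + 1 => i :: j :: dword i j k

lemma wordProd_dword (i j : B) (k : ℕ) :
    cs.wordProd (dword i j k) = (cs.simple i * cs.simple j) ^ k := by
  induction k with
  | zero => simp [dword]
  | succ k ih =>
    rw [dword, wordProd_cons, wordProd_cons, ih, pow_succ']
    group

lemma simple_mul_pow (i j : B) (k : ℕ) :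
    cs.simple j * (cs.simple i * cs.simple j) ^ k
      = ((cs.simple i * cs.simple j)⁻¹) ^ k * cs.simple j := by
  induction k with
  | zero => simp
  | succ k ih =>
    rw [pow_succ', ← mul_assoc, pow_succ']
    have h1 : cs.simple j * (cs.simple i * cs.simple j)
        = (cs.simple i * cs.simple j)⁻¹ * cs.simple j := by
      simp [mul_assoc]
    rw [h1, mul_assoc, ih, ← mul_assoc]

lemma ris_dword (i j : B) (k : ℕ) :
    cs.rightInvSeq (dword i j k) =
      ((range (2 * k)).reverse).map
        (fun d => ((cs.simple i * cs.simple j)⁻¹) ^ d * cs.simple j) := by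
  set x := cs.simple i * cs.simple j with hx
  induction k with
  | zero => simp [dword]
  | succ k ih =>
    have hrange : (range (2 * (k + 1))).reverse
        = (2 * k + 1) :: (2 * k) :: (range (2 * k)).reverse := by
      have : 2 * (k + 1) = (2 * k + 1) + 1 := by ring
      rw [this, range_succ, range_succ]
      simp
    rw [hrange]
    have hd : cs.rightInvSeq (dword i j (k + 1)) =
        ((cs.wordProd (j :: dword i j k))⁻¹ * cs.simple i * cs.wordProd (j :: dword i j k))
          :: ((cs.wordProd (dword i j k))⁻¹ * cs.simple j * cs.wordProd (dword i j k))
          :: cs.rightInvSeq (dword i j k) := rfl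
    rw [hd, ih]
    congr 1
    · -- first entry = x⁻¹ ^ (2k+1) * s j
      rw [wordProd_cons, wordProd_dword, ← hx]
      have hjx := simple_mul_pow cs i j k
      rw [← hx] at hjx
      rw [mul_inv_rev, inv_simple]
      calc (x ^ k)⁻¹ * cs.simple j * cs.simple i * (cs.simple j * x ^ k)
          = (x ^ k)⁻¹ * (cs.simple j * cs.simple i * cs.simple j) * x ^ k := by group
        _ = (x ^ k)⁻¹ * (x⁻¹ * cs.simple j) * x ^ k := by
              congr 1
              rw [hx]
              simp [mul_assoc]
        _ = (x⁻¹) ^ (k + 1) * (cs.simple j * x ^ k) := by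
              rw [pow_succ']
              group
        _ = (x⁻¹) ^ (k + 1) * ((x⁻¹) ^ k * cs.simple j) := by rw [hjx]
        _ = (x⁻¹) ^ (2 * k + 1) * cs.simple j := by
              rw [← mul_assoc, ← pow_add]
              congr 2
              ring
    congr 1
    · -- second entry = x⁻¹ ^ (2k) * s j
      rw [wordProd_dword, ← hx]
      have hjx := simple_mul_pow cs i j k
      rw [← hx] at hjx
      calc (x ^ k)⁻¹ * cs.simple j * x ^ k
          = (x⁻¹) ^ k * (cs.simple j * x ^ k) := by rw [inv_pow]; group
        _ = (x⁻¹) ^ k * ((x⁻¹) ^ k * cs.simple j) := by rw [hjx]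
        _ = (x⁻¹) ^ (2 * k) * cs.simple j := by
              rw [← mul_assoc, ← pow_add]
              congr 2
              ring

lemma mu_liftable : M.IsLiftable (mu cs) := by
  intro i j
  set m := M i j with hm
  have key : (mu cs i * mu cs j) ^ m = ((dword i j m).map (mu cs)).prod := by
    induction m with
    | zero => simp [dword]
    | succ k ih =>
      rw [pow_succ', ih, dword]
      simp [mul_assoc]
  rw [key]
  apply Equiv.ext
  rintro ⟨t, e⟩
  rw [muProd_apply]
  have hπ : cs.wordProd (dword i j m) = 1 := by
    rw [wordProd_dword, hm]
    exact cs.simple_mul_simple_pow i j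
  have hxinv : ((cs.simple i * cs.simple j)⁻¹) ^ m = 1 := by
    rw [inv_pow, hm, cs.simple_mul_simple_pow i j, inv_one]
  have hcount : ((cs.rightInvSeq (dword i j m)).count t)
      = 2 * (((range m).map
          (fun d => ((cs.simple i * cs.simple j)⁻¹) ^ d * cs.simple j)).count t) := by
    set g := fun d => ((cs.simple i * cs.simple j)⁻¹) ^ d * cs.simple j with hg
    rw [ris_dword, map_reverse, count_reverse]
    have h2m : 2 * m = m + m := by ring
    rw [h2m, range_add, map_append, count_append, map_map]
    have hmap : (range m).map (g ∘ fun x => m + x) = (range m).map g := by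
      apply map_congr_left
      intro d _
      simp only [Function.comp_apply, hg]
      rw [pow_add, hxinv, one_mul]
    rw [hmap]
    ring
  rw [hπ, hcount]
  have h2 : ((2 * (((range m).map
      (fun d => ((cs.simple i * cs.simple j)⁻¹) ^ d * cs.simple j)).count t) : ℕ) : ZMod 2)
      = 0 := by
    push_cast
    rw [show (2 : ZMod 2) = 0 by decide]
    ring
  rw [h2]
  simp


/-- The parity representation of `W`. -/
noncomputable def Phi : W →* Equiv.Perm (W × ZMod 2) := cs.lift ⟨mu cs, mu_liftable cs⟩

lemma Phi_simple (i : B) : Phi cs (cs.simple i) = mu cs i := cs.lift_apply_simple _ i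

lemma Phi_wordProd (l : List B) : Phi cs (cs.wordProd l) = (l.map (mu cs)).prod := by
  rw [CoxeterSystem.wordProd, map_list_prod, List.map_map]
  congr 1
  apply map_congr_left
  intro i _
  exact Phi_simple cs i

/-- Parity cocycle. -/
noncomputable def Pa (w t : W) : ZMod 2 := (Phi cs w (t, 0)).2

lemma Phi_apply (w t : W) (e : ZMod 2) :
    Phi cs w (t, e) = (w * t * w⁻¹, e + Pa cs w t) := by
  obtain ⟨l, rfl⟩ := cs.wordProd_surjective w
  rw [Pa, Phi_wordProd, muProd_apply, muProd_apply]
  simp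

lemma Pa_count (l : List B) (t : W) :
    (((cs.rightInvSeq l).count t : ℕ) : ZMod 2) = Pa cs (cs.wordProd l) t := by
  have h := muProd_apply cs l t 0
  rw [← Phi_wordProd, Phi_apply] at h
  have := congrArg Prod.snd h
  simpa using this.symm

lemma Pa_cocycle (x y t : W) : Pa cs (x * y) t = Pa cs y t + Pa cs x (y * t * y⁻¹) := by
  have h1 : Phi cs (x * y) (t, 0) = Phi cs x (Phi cs y (t, 0)) := by
    rw [map_mul]; rfl
  rw [Phi_apply cs y t 0, Phi_apply cs x _ _, Phi_apply cs (x * y) t 0] at h1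
  have := congrArg Prod.snd h1
  simpa using this

lemma Pa_one (t : W) : Pa cs 1 t = 0 := by
  rw [Pa, map_one]
  rfl

lemma Pa_simple_self (i : B) : Pa cs (cs.simple i) (cs.simple i) = 1 := by
  rw [Pa, Phi_simple, mu_apply]
  simp

lemma Pa_refl {t : W} (ht : cs.IsReflection t) : Pa cs t t = 1 := by
  obtain ⟨u, i, rfl⟩ := ht
  set T := u * cs.simple i * u⁻¹ with hT
  have hconj : u⁻¹ * T * (u⁻¹)⁻¹ = cs.simple i := by rw [hT]; group
  have h0 : Pa cs u⁻¹ T + Pa cs u (cs.simple i) = 0 := by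
    have := Pa_cocycle cs u u⁻¹ T
    rw [mul_inv_cancel, Pa_one, hconj] at this
    exact this.symm
  have h1 : Pa cs T T = Pa cs u⁻¹ T + Pa cs (u * cs.simple i) (cs.simple i) := by
    have := Pa_cocycle cs (u * cs.simple i) u⁻¹ T
    rw [hconj] at this
    rw [hT] at this ⊢
    rw [mul_assoc] at this ⊢
    exact this
  have h2 : Pa cs (u * cs.simple i) (cs.simple i)
      = Pa cs (cs.simple i) (cs.simple i) + Pa cs u (cs.simple i) := by
    have := Pa_cocycle cs u (cs.simple i) (cs.simple i)
    have hs : cs.simple i * cs.simple i * (cs.simple i)⁻¹ = cs.simple i := by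
      simp
    rw [hs] at this
    exact this
  rw [h1, h2, Pa_simple_self]
  have : Pa cs u⁻¹ T + (1 + Pa cs u (cs.simple i))
      = (Pa cs u⁻¹ T + Pa cs u (cs.simple i)) + 1 := by ring
  rw [this, h0, zero_add]

lemma zmod2_cases (c : ZMod 2) : c = 0 ∨ c = 1 := by
  revert c; decide

lemma isRightInversion_of_Pa {w t : W} (ht : cs.IsReflection t) (h : Pa cs w t = 1) :
    cs.IsRightInversion w t := by
  obtain ⟨l, hl, rfl⟩ := cs.exists_reduced_word' w
  have hc := Pa_count cs l t
  rw [h] at hc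
  have hmem : t ∈ cs.rightInvSeq l := by
    by_contra hmem
    rw [List.count_eq_zero.mpr hmem] at hc
    simp at hc
  exact cs.isRightInversion_of_mem_rightInvSeq hl hmem

lemma Pa_of_isRightInversion {w t : W} (ht : cs.IsReflection t)
    (h : cs.IsRightInversion w t) : Pa cs w t = 1 := by
  set v := w * t with hv
  have hw : w = v * t := by
    rw [hv, mul_assoc, ht.mul_self, mul_one]
  have h2 : Pa cs w t = Pa cs t t + Pa cs v (t * t * t⁻¹) := by
    rw [hw]
    exact Pa_cocycle cs v t t
  have h3 : t * t * t⁻¹ = t := by rw [ht.mul_self, one_mul, ht.inv]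
  have hv0 : Pa cs v t = 0 := by
    rcases zmod2_cases (Pa cs v t) with h0 | h1
    · exact h0
    · exfalso
      have hri := isRightInversion_of_Pa cs ht h1
      have hlt : cs.length (v * t) < cs.length v := hri.2
      rw [← hw, hv] at hlt
      exact absurd h.2 (by omega)
  rw [h2, h3, hv0, Pa_refl cs ht, add_zero]

/-- Left inversion subdivision: if `t` is a left inversion of `a * b`, then either it is a
left inversion of `a`, or its conjugate is a left inversion of `b`. -/
lemma isLeftInversion_mul {a b t : W} (ht : cs.IsReflection t)
    (h : cs.IsLeftInversion (a * b) t) :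
    cs.IsLeftInversion a t ∨ cs.IsLeftInversion b (a⁻¹ * t * a) := by
  have h1 : Pa cs (a * b)⁻¹ t = 1 := by
    apply Pa_of_isRightInversion cs ht
    exact (cs.isRightInversion_inv_iff).mpr h
  have hco : Pa cs (a * b)⁻¹ t = Pa cs a⁻¹ t + Pa cs b⁻¹ (a⁻¹ * t * a) := by
    have := Pa_cocycle cs b⁻¹ a⁻¹ t
    rw [mul_inv_rev] at h1 ⊢
    rw [this]
    congr 2
    rw [inv_inv]
  rw [hco] at h1
  have htconj : cs.IsReflection (a⁻¹ * t * a) := by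
    have := ht.conj a⁻¹
    rwa [inv_inv] at this
  rcases zmod2_cases (Pa cs a⁻¹ t) with h0 | hone
  · right
    rw [h0, zero_add] at h1
    exact (cs.isRightInversion_inv_iff).mp (isRightInversion_of_Pa cs htconj h1)
  · left
    exact (cs.isRightInversion_inv_iff).mp (isRightInversion_of_Pa cs ht hone)


lemma isLeftInversion_prefix_conj {p q : List B} {j : B}
    (hred : cs.IsReduced (p ++ j :: q)) :
    cs.IsLeftInversion (cs.wordProd (p ++ j :: q))
      (cs.wordProd p * cs.simple j * (cs.wordProd p)⁻¹) := by
  apply cs.isLeftInversion_of_mem_leftInvSeq hred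
  have hlen : p.length < (p ++ j :: q).length := by simp
  have h1 : (cs.leftInvSeq (p ++ j :: q)).getD p.length 1
      = cs.wordProd p * cs.simple j * (cs.wordProd p)⁻¹ := by
    rw [cs.getD_leftInvSeq]
    have ht : (p ++ j :: q).take p.length = p := List.take_left
    have hg : (p ++ j :: q)[p.length]? = some j := by
      rw [List.getElem?_append_right (le_refl p.length)]
      simp
    rw [ht, hg]
    rfl
  rw [← h1]
  have hlt : p.length < (cs.leftInvSeq (p ++ j :: q)).length := by
    rw [cs.length_leftInvSeq]
    exact hlen
  rw [List.getD_eq_getElem _ _ hlt]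
  exact List.getElem_mem hlt

/-! ### Artin group side -/

lemma artinWord_cons (i : B) (l : List B) :
    artinWord M (i :: l) = (PresentedGroup.of i : ArtinGroup M) * artinWord M l := by
  simp [artinWord]

lemma artinWord_append (l₁ l₂ : List B) :
    artinWord M (l₁ ++ l₂) = artinWord M l₁ * artinWord M l₂ := by
  simp [artinWord]

lemma pr_artinWord (pr : ArtinGroup M →* W)
    (hpr : ∀ i : B, pr (PresentedGroup.of i : ArtinGroup M) = cs.simple i) (l : List B) :
    pr (artinWord M l) = cs.wordProd l := by
  induction l with
  | nil => simp [artinWord]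
  | cons i l ih =>
    rw [artinWord_cons, map_mul, hpr, ih, wordProd_cons]

lemma PL_step (PL : W → ArtinGroup M)
    (hPL : ∀ ω : List B, cs.IsReduced ω → PL (cs.wordProd ω) = artinWord M ω)
    (v : W) (i : B) (h : cs.length (v * cs.simple i) = cs.length v + 1) :
    PL (v * cs.simple i) = PL v * (PresentedGroup.of i : ArtinGroup M) := by
  obtain ⟨l, hl, rfl⟩ := cs.exists_reduced_word' v
  have h2 : cs.IsReduced (l ++ [i]) := by
    have hx : cs.length (cs.wordProd (l ++ [i])) = l.length + 1 := by
      unfold CoxeterSystem.IsReduced at hl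
      rw [wordProd_append, wordProd_singleton, h, hl]
    unfold CoxeterSystem.IsReduced
    simp [hx]
  have h3 := hPL (l ++ [i]) h2
  rw [wordProd_append, wordProd_singleton] at h3
  rw [h3, hPL l hl, artinWord_append]
  simp [artinWord]

/-- Main induction: multiplying a positive lift by an Artin word equals the positive lift of the
product, modulo correction factors which are conjugates of squares of generators. -/
lemma main_lemma (W₀ : Subgroup W) (pr : ArtinGroup M →* W)
    (hpr : ∀ i : B, pr (PresentedGroup.of i : ArtinGroup M) = cs.simple i)
    (PL : W → ArtinGroup M)
    (hPL : ∀ ω : List B, cs.IsReduced ω → PL (cs.wordProd ω) = artinWord M ω) :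
    ∀ (l : List B) (v : W),
      (∀ p j q, l = p ++ j :: q →
        cs.length (v * cs.wordProd p * cs.simple j) < cs.length (v * cs.wordProd p) →
        (cs.wordProd q)⁻¹ * cs.simple j * cs.wordProd q ∉ W₀) →
      (PL (v * cs.wordProd l))⁻¹ * (PL v * artinWord M l) ∈ K0 W₀ pr := by
  intro l
  induction l with
  | nil =>
    intro v _
    simp only [wordProd_nil, mul_one, artinWord, List.map_nil, List.prod_nil]
    rw [inv_mul_cancel]
    exact one_mem _
  | cons i l ih =>
    intro v hH
    have hshift : ∀ p j q, l = p ++ j :: q →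
        cs.length ((v * cs.simple i) * cs.wordProd p * cs.simple j)
          < cs.length ((v * cs.simple i) * cs.wordProd p) →
        (cs.wordProd q)⁻¹ * cs.simple j * cs.wordProd q ∉ W₀ := by
      intro p j q hpq hlen
      refine hH (i :: p) j q (by rw [hpq, List.cons_append]) ?_
      rw [wordProd_cons, ← mul_assoc]
      exact hlen
    have hw : v * cs.wordProd (i :: l) = (v * cs.simple i) * cs.wordProd l := by
      rw [wordProd_cons, mul_assoc]
    rcases cs.length_mul_simple v i with hA | hB
    · -- no cancellation
      have hstep := PL_step cs PL hPL v i hA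
      rw [hw, artinWord_cons,
        show PL v * ((PresentedGroup.of i : ArtinGroup M) * artinWord M l)
          = (PL v * PresentedGroup.of i) * artinWord M l from (mul_assoc _ _ _).symm, ← hstep]
      exact ih (v * cs.simple i) hshift
    · -- cancellation
      have hvsi : (v * cs.simple i) * cs.simple i = v := by
        rw [mul_assoc, cs.simple_mul_simple_self i, mul_one]
      have hstep : PL ((v * cs.simple i) * cs.simple i)
          = PL (v * cs.simple i) * (PresentedGroup.of i : ArtinGroup M) := by
        apply PL_step cs PL hPL
        rw [hvsi]
        omega
      have hv : PL v = PL (v * cs.simple i) * (PresentedGroup.of i : ArtinGroup M) := by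
        rw [← hstep, hvsi]
      have hgen : (artinWord M l)⁻¹ * (PresentedGroup.of i : ArtinGroup M)
          * PresentedGroup.of i * artinWord M l ∈ K0 W₀ pr := by
        apply Subgroup.subset_closure
        refine ⟨(artinWord M l)⁻¹, i, by rw [inv_inv], ?_⟩
        rw [inv_inv, map_mul, map_mul, map_inv, pr_artinWord cs pr hpr, hpr]
        apply hH [] i l rfl
        rw [wordProd_nil, mul_one]
        omega
      have key : PL v * artinWord M (i :: l) =
          (PL (v * cs.simple i) * artinWord M l) *
            ((artinWord M l)⁻¹ * (PresentedGroup.of i : ArtinGroup M)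
              * PresentedGroup.of i * artinWord M l) := by
        rw [hv, artinWord_cons]
        group
      rw [hw, key, ← mul_assoc]
      exact mul_mem (ih (v * cs.simple i) hshift) hgen


/-- If `u ∈ U₀` then multiplying any positive lift by `PL u` on the right is well-behaved
modulo `K₀`. -/
lemma right_factor_U (W₀ : Subgroup W) (pr : ArtinGroup M →* W)
    (hpr : ∀ i : B, pr (PresentedGroup.of i : ArtinGroup M) = cs.simple i)
    (PL : W → ArtinGroup M)
    (hPL : ∀ ω : List B, cs.IsReduced ω → PL (cs.wordProd ω) = artinWord M ω)
    {u : W} (hu : u ∈ Uset cs W₀) (v : W) :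
    (PL (v * u))⁻¹ * (PL v * PL u) ∈ K0 W₀ pr := by
  obtain ⟨l, hl, rfl⟩ := cs.exists_reduced_word' u
  rw [hPL l hl]
  apply main_lemma cs W₀ pr hpr PL hPL
  intro p j q hpq _ hmem
  subst hpq
  set r := cs.wordProd p * cs.simple j * (cs.wordProd p)⁻¹ with hr
  have hinv : cs.IsLeftInversion (cs.wordProd (p ++ j :: q)) r :=
    isLeftInversion_prefix_conj cs hl
  have hcomp : cs.wordProd (p ++ j :: q)
      * ((cs.wordProd q)⁻¹ * cs.simple j * cs.wordProd q)
      * (cs.wordProd (p ++ j :: q))⁻¹ = r := by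
    rw [wordProd_append, wordProd_cons, hr]
    group
  have hrW : r ∈ W₀ := by
    rw [← hcomp]
    exact (Subgroup.mem_normalizer_iff.mp hu.1 _).mp hmem
  have hmem2 : r ∈ invSet cs (cs.wordProd (p ++ j :: q)) ∩ (W₀ : Set W) := ⟨hinv, hrW⟩
  rw [hu.2] at hmem2
  exact hmem2

lemma part2_aux (W₀ : Subgroup W) (pr : ArtinGroup M →* W)
    (hpr : ∀ i : B, pr (PresentedGroup.of i : ArtinGroup M) = cs.simple i)
    (PL : W → ArtinGroup M)
    (hPL : ∀ ω : List B, cs.IsReduced ω → PL (cs.wordProd ω) = artinWord M ω)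
    {u t : W} (hu : u ∈ Uset cs W₀) (ht : t ∈ canonicalGens cs W₀) :
    (PL (u * t))⁻¹ * (PL u * PL t) ∈ K0 W₀ pr := by
  have htrefl : cs.IsReflection t := ht.1
  have htW : t ∈ W₀ := by
    have h1 : t ∈ invSet cs t ∩ (W₀ : Set W) := by
      rw [ht.2]
      rfl
    exact h1.2
  have ht'refl : cs.IsReflection (u * t * u⁻¹) := htrefl.conj u
  have ht'W : u * t * u⁻¹ ∈ W₀ := (Subgroup.mem_normalizer_iff.mp hu.1 _).mp htW
  obtain ⟨l, hl, hteq⟩ := cs.exists_reduced_word' t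
  rw [hteq, hPL l hl]
  apply main_lemma cs W₀ pr hpr PL hPL
  intro p j q hpq hlen hmem
  subst hpq
  set r := cs.wordProd p * cs.simple j * (cs.wordProd p)⁻¹ with hr
  have hinv : cs.IsLeftInversion t r := by
    rw [hteq]
    exact isLeftInversion_prefix_conj cs hl
  have hrW : r ∈ W₀ := by
    have hcomp : r = t * ((cs.wordProd q)⁻¹ * cs.simple j * cs.wordProd q) * t⁻¹ := by
      rw [hteq, wordProd_append, wordProd_cons, hr]
      group
    rw [hcomp]
    exact mul_mem (mul_mem htW hmem) (inv_mem htW)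
  have hrt : r = t := by
    have h1 : r ∈ invSet cs t ∩ (W₀ : Set W) := ⟨hinv, hrW⟩
    rw [ht.2] at h1
    exact h1
  have hts : t * cs.wordProd p = cs.wordProd p * cs.simple j := by
    rw [← hrt, hr]
    group
  have hcomm : u * cs.wordProd p * cs.simple j = (u * t * u⁻¹) * (u * cs.wordProd p) := by
    have h1 : (u * t * u⁻¹) * (u * cs.wordProd p) = u * (t * cs.wordProd p) := by group
    rw [h1, hts, ← mul_assoc]
  have hlv : cs.IsLeftInversion (u * cs.wordProd p) (u * t * u⁻¹) := by
    refine ⟨ht'refl, ?_⟩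
    rw [← hcomm]
    exact hlen
  rcases isLeftInversion_mul cs ht'refl hlv with h | h
  · have hmem2 : (u * t * u⁻¹) ∈ invSet cs u ∩ (W₀ : Set W) := ⟨h, ht'W⟩
    rw [hu.2] at hmem2
    exact hmem2
  · have hut : u⁻¹ * (u * t * u⁻¹) * u = t := by group
    rw [hut] at h
    have h2 : cs.length (cs.wordProd p * cs.simple j) < cs.length (cs.wordProd p) := by
      have := h.2
      rwa [hts] at this
    have hred : cs.IsReduced (p ++ [j]) := by
      have h3 := hl.take (p.length + 1)
      have h4 : (p ++ j :: q).take (p.length + 1) = p ++ [j] := by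
        have : p.length + 1 = p.length + 1 := rfl
        rw [show (p.length + 1) = p.length + 1 from rfl, List.take_append]
        simp
      rwa [h4] at h3
    have h5 : cs.length (cs.wordProd (p ++ [j])) = p.length + 1 := by
      unfold CoxeterSystem.IsReduced at hred
      rw [hred]
      simp
    rw [wordProd_append, wordProd_singleton] at h5
    have h6 : cs.length (cs.wordProd p) ≤ p.length := cs.length_wordProd_le p
    omega

end PsiHomAux

/-- The restriction of `ψ : w ↦ w̲K₀` to `U₀` is a group homomorphism, and for
`u ∈ U₀`, `t ∈ S₀` we have `ψ(u)ψ(t) = ψ(utu⁻¹)ψ(u)`. Equality of cosets of `K₀`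
is expressed as membership of the appropriate quotient in `K₀`. -/
theorem psi_hom_on_U0 (cs : CoxeterSystem M W) (W₀ : Subgroup W)
    (h : IsReflectionSubgroup cs W₀)
    (pr : ArtinGroup M →* W)
    (hpr : ∀ i : B, pr (PresentedGroup.of i : ArtinGroup M) = cs.simple i)
    (PL : W → ArtinGroup M)
    (hPL : ∀ ω : List B, cs.IsReduced ω → PL (cs.wordProd ω) = artinWord M ω) :
    (∀ u₁ ∈ Uset cs W₀, ∀ u₂ ∈ Uset cs W₀,
      (PL (u₁ * u₂))⁻¹ * (PL u₁ * PL u₂) ∈ K0 W₀ pr) ∧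
    (∀ u ∈ Uset cs W₀, ∀ t ∈ canonicalGens cs W₀,
      (PL (u * t * u⁻¹) * PL u)⁻¹ * (PL u * PL t) ∈ K0 W₀ pr) := by
  constructor
  · intro u₁ _ u₂ hu₂
    exact PsiHomAux.right_factor_U cs W₀ pr hpr PL hPL hu₂ u₁
  · intro u hu t ht
    have hX₁ := PsiHomAux.right_factor_U cs W₀ pr hpr PL hPL hu (u * t * u⁻¹)
    have hX₂ := PsiHomAux.part2_aux cs W₀ pr hpr PL hPL hu ht
    have hconj : u * t * u⁻¹ * u = u * t := by group
    rw [hconj] at hX₁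
    have hkey : (PL (u * t * u⁻¹) * PL u)⁻¹ * (PL u * PL t)
        = ((PL (u * t))⁻¹ * (PL (u * t * u⁻¹) * PL u))⁻¹
          * ((PL (u * t))⁻¹ * (PL u * PL t)) := by
      group
    rw [hkey]
    exact mul_mem (inv_mem hX₁) hX₂
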